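/- arXiv:2502.08965 — 2 statements merged into one kernel-verified Lean document; each statement's English description precedes it below -/
import Mathlib

section
/- For every n ≥ 2 and every element g of STVB_n, there exist an element p of STVB_n with φ₁(p) = identity and an element r of the submonoid of STVB_n generated by ρ_1,…,ρ_{n−1} such that g = p·r. -/
namespace SingTVB

/-- Generators of the singular twisted virtual braid monoid `STVB n`
(0-based indexing: `sig i` is the paper's σ_{i+1}, `gam j` is the paper's γ_{j+1}). -/
inductive Gen (n : ℕ) : Type
  | sig : Fin (n - 1) → Gen n
  | sigb : Fin (n - 1) → Gen n
  | rho : Fin (n - 1) → Gen n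
  | tau : Fin (n - 1) → Gen n
  | gam : Fin n → Gen n

abbrev FM (n : ℕ) := FreeMonoid (Gen n)

/-- The strand `i` (lower strand of the `i`-th crossing), as an element of `Fin n`. -/
def fa {n : ℕ} (i : Fin (n - 1)) : Fin n := ⟨i.val, by have := i.isLt; omega⟩
/-- The strand `i+1` (upper strand of the `i`-th crossing), as an element of `Fin n`. -/
def fb {n : ℕ} (i : Fin (n - 1)) : Fin n := ⟨i.val + 1, by have := i.isLt; omega⟩

def Ws {n : ℕ} (i : Fin (n - 1)) : FM n := FreeMonoid.of (Gen.sig i)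
def Wsb {n : ℕ} (i : Fin (n - 1)) : FM n := FreeMonoid.of (Gen.sigb i)
def Wr {n : ℕ} (i : Fin (n - 1)) : FM n := FreeMonoid.of (Gen.rho i)
def Wt {n : ℕ} (i : Fin (n - 1)) : FM n := FreeMonoid.of (Gen.tau i)
def Wg {n : ℕ} (j : Fin n) : FM n := FreeMonoid.of (Gen.gam j)

/-- `|i - j| > 1`. -/
def Far {m : ℕ} (i j : Fin m) : Prop := i.val + 1 < j.val ∨ j.val + 1 < i.val

/-- Defining relations of the singular twisted virtual braid monoid. -/
inductive Rel (n : ℕ) : FM n → FM n → Prop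
  | ss {i j : Fin (n - 1)} (h : Far i j) : Rel n (Ws i * Ws j) (Ws j * Ws i)
  | rr {i j : Fin (n - 1)} (h : Far i j) : Rel n (Wr i * Wr j) (Wr j * Wr i)
  | sr {i j : Fin (n - 1)} (h : Far i j) : Rel n (Ws i * Wr j) (Wr j * Ws i)
  | tt {i j : Fin (n - 1)} (h : Far i j) : Rel n (Wt i * Wt j) (Wt j * Wt i)
  | st {i j : Fin (n - 1)} (h : Far i j) : Rel n (Ws i * Wt j) (Wt j * Ws i)
  | tr {i j : Fin (n - 1)} (h : Far i j) : Rel n (Wt i * Wr j) (Wr j * Wt i)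
  | sss {i j : Fin (n - 1)} (h : j.val = i.val + 1) :
      Rel n (Ws i * Ws j * Ws i) (Ws j * Ws i * Ws j)
  | rrr {i j : Fin (n - 1)} (h : j.val = i.val + 1) :
      Rel n (Wr i * Wr j * Wr i) (Wr j * Wr i * Wr j)
  | rsr {i j : Fin (n - 1)} (h : j.val = i.val + 1) :
      Rel n (Wr i * Ws j * Wr i) (Wr j * Ws i * Wr j)
  | rtr {i j : Fin (n - 1)} (h : j.val = i.val + 1) :
      Rel n (Wr i * Wt j * Wr i) (Wr j * Wt i * Wr j)
  | sst {i j : Fin (n - 1)} (h : j.val = i.val + 1) :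
      Rel n (Ws i * Ws j * Wt i) (Wt j * Ws i * Ws j)
  | sst' {i j : Fin (n - 1)} (h : j.val = i.val + 1) :
      Rel n (Ws j * Ws i * Wt j) (Wt i * Ws j * Ws i)
  | rho2 (i : Fin (n - 1)) : Rel n (Wr i * Wr i) 1
  | ssb (i : Fin (n - 1)) : Rel n (Ws i * Wsb i) 1
  | sbs (i : Fin (n - 1)) : Rel n (Wsb i * Ws i) 1
  | stc (i : Fin (n - 1)) : Rel n (Ws i * Wt i) (Wt i * Ws i)
  | grel (i : Fin (n - 1)) : Rel n (Wg (fb i) * Wr i) (Wr i * Wg (fa i))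
  | rsrg (i : Fin (n - 1)) :
      Rel n (Wr i * Ws i * Wr i) (Wg (fb i) * Wg (fa i) * Ws i * Wg (fa i) * Wg (fb i))
  | rtrg (i : Fin (n - 1)) :
      Rel n (Wr i * Wt i * Wr i) (Wg (fb i) * Wg (fa i) * Wt i * Wg (fa i) * Wg (fb i))
  | g2 (j : Fin n) : Rel n (Wg j * Wg j) 1
  | gg (i j : Fin n) : Rel n (Wg i * Wg j) (Wg j * Wg i)
  | grc {i : Fin (n - 1)} {j : Fin n} (h1 : j ≠ fa i) (h2 : j ≠ fb i) :
      Rel n (Wg j * Wr i) (Wr i * Wg j)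
  | sgc {i : Fin (n - 1)} {j : Fin n} (h1 : j ≠ fa i) (h2 : j ≠ fb i) :
      Rel n (Ws i * Wg j) (Wg j * Ws i)
  | tgc {i : Fin (n - 1)} {j : Fin n} (h1 : j ≠ fa i) (h2 : j ≠ fb i) :
      Rel n (Wt i * Wg j) (Wg j * Wt i)

/-- The singular twisted virtual braid monoid on `n` strands. -/
abbrev STVB (n : ℕ) := PresentedMonoid (Rel n)

def mkS (n : ℕ) : FM n →* STVB n := PresentedMonoid.mk (Rel n)

def sigE (n : ℕ) (i : Fin (n - 1)) : STVB n := mkS n (Ws i)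
def sigbE (n : ℕ) (i : Fin (n - 1)) : STVB n := mkS n (Wsb i)
def rhoE (n : ℕ) (i : Fin (n - 1)) : STVB n := mkS n (Wr i)
def tauE (n : ℕ) (i : Fin (n - 1)) : STVB n := mkS n (Wt i)
def gamE (n : ℕ) (j : Fin n) : STVB n := mkS n (Wg j)

/-- The transposition `(i, i+1)` in the symmetric group on `Fin n`. -/
def swp {n : ℕ} (i : Fin (n - 1)) : Equiv.Perm (Fin n) := Equiv.swap (fa i) (fb i)

end SingTVB
namespace SingTVB

/-- ρ-generator word with a natural-number (0-based) index; junk value `1` out of range. -/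
def WrN (n : ℕ) (k : ℕ) : FM n := if h : k < n - 1 then Wr ⟨k, h⟩ else 1
def WsN (n : ℕ) (k : ℕ) : FM n := if h : k < n - 1 then Ws ⟨k, h⟩ else 1
def WsbN (n : ℕ) (k : ℕ) : FM n := if h : k < n - 1 then Wsb ⟨k, h⟩ else 1
def WtN (n : ℕ) (k : ℕ) : FM n := if h : k < n - 1 then Wt ⟨k, h⟩ else 1

/-- The ascending word `ρ_{i+1} ρ_{i+2} ⋯ ρ_{j-1}` (0-based strand indices `i < j`). -/
def asc (n i j : ℕ) : FM n := ((List.range' (i + 1) (j - 1 - i)).map (WrN n)).prod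
/-- The descending word `ρ_{j-1} ρ_{j-2} ⋯ ρ_{i+1}` (0-based strand indices `i < j`). -/
def desc (n i j : ℕ) : FM n := ((List.range' (i + 1) (j - 1 - i)).reverse.map (WrN n)).prod

/-- The word for the generator `λ_{i,j}` (0-based strands `i ≠ j`), built from
`λ_{i,i+1} = ρ_i σ̄_i` and `λ_{i+1,i} = ρ_i λ_{i,i+1} ρ_i` by conjugation. -/
def lamW (n i j : ℕ) : FM n :=
  if i < j then desc n i j * (WrN n i * WsbN n i) * asc n i j
  else desc n j i * (WrN n j * (WrN n j * WsbN n j) * WrN n j) * asc n j i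

/-- The word for `λ̄_{i,j}`, built from `λ̄_{i,i+1} = σ_i ρ_i`. -/
def lamBarW (n i j : ℕ) : FM n :=
  if i < j then desc n i j * (WsN n i * WrN n i) * asc n i j
  else desc n j i * (WrN n j * (WsN n j * WrN n j) * WrN n j) * asc n j i

/-- The word for `y_{i,j}`, built from `y_{i,i+1} = τ_i ρ_i`. -/
def yW (n i j : ℕ) : FM n :=
  if i < j then desc n i j * (WtN n i * WrN n i) * asc n i j
  else desc n j i * (WrN n j * (WtN n j * WrN n j) * WrN n j) * asc n j i

/-- The word for `x_{i,j}`, built from `x_{i,i+1} = σ_i` and `x_{i+1,i} = ρ_i σ_i ρ_i`. -/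
def xW (n i j : ℕ) : FM n :=
  if i < j then desc n i j * WsN n i * asc n i j
  else desc n j i * (WrN n j * WsN n j * WrN n j) * asc n j i

/-- The word for `x̄_{i,j}`, with `σ̄` in place of `σ`. -/
def xBarW (n i j : ℕ) : FM n :=
  if i < j then desc n i j * WsbN n i * asc n i j
  else desc n j i * (WrN n j * WsbN n j * WrN n j) * asc n j i

/-- The word for `z_{i,j}`, built from `z_{i,i+1} = τ_i` and `z_{i+1,i} = ρ_i τ_i ρ_i`. -/
def zW (n i j : ℕ) : FM n :=
  if i < j then desc n i j * WtN n i * asc n i j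
  else desc n j i * (WrN n j * WtN n j * WrN n j) * asc n j i

def lam (n : ℕ) (i j : Fin n) : STVB n := mkS n (lamW n i j)
def lamBar (n : ℕ) (i j : Fin n) : STVB n := mkS n (lamBarW n i j)
def yel (n : ℕ) (i j : Fin n) : STVB n := mkS n (yW n i j)
def xel (n : ℕ) (i j : Fin n) : STVB n := mkS n (xW n i j)
def xBar (n : ℕ) (i j : Fin n) : STVB n := mkS n (xBarW n i j)
def zel (n : ℕ) (i j : Fin n) : STVB n := mkS n (zW n i j)

end SingTVB


namespace SingTVB

theorem rho_invol (n : ℕ) (i : Fin (n - 1)) : rhoE n i * rhoE n i = 1 := by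
  show mkS n (Wr i) * mkS n (Wr i) = 1
  rw [← map_mul]
  exact Quotient.sound (ConGen.Rel.of _ _ (Rel.rho2 i))

theorem closure_inv (n : ℕ) {r : STVB n}
    (hr : r ∈ Submonoid.closure (Set.range (rhoE n))) :
    ∃ r' ∈ Submonoid.closure (Set.range (rhoE n)), r * r' = 1 ∧ r' * r = 1 := by
  induction hr using Submonoid.closure_induction with
  | mem x hx =>
    obtain ⟨i, rfl⟩ := hx
    exact ⟨rhoE n i, Submonoid.subset_closure ⟨i, rfl⟩, rho_invol n i, rho_invol n i⟩
  | one => exact ⟨1, Submonoid.one_mem _, one_mul 1, one_mul 1⟩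
  | mul a b ha hb iha ihb =>
    obtain ⟨a', ha', haa, haa'⟩ := iha
    obtain ⟨b', hb', hbb, hbb'⟩ := ihb
    refine ⟨b' * a', Submonoid.mul_mem _ hb' ha', ?_, ?_⟩
    · calc a * b * (b' * a') = a * (b * b') * a' := by group
        _ = 1 := by rw [hbb, mul_one, haa]
    · calc b' * a' * (a * b) = b' * (a' * a) * b := by group
        _ = 1 := by rw [haa', mul_one, hbb']

end SingTVB

open SingTVB in
/-- for every element `g` of `STVB n` there are `p` with `φ₁ p = 1` and `r` in
the submonoid generated by the `ρᵢ` such that `g = p * r`.  Here `φ₁` is characterized by its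
values on the generators. -/
theorem stvb_decomposition (n : ℕ) (hn : 2 ≤ n) (φ : STVB n →* Equiv.Perm (Fin n))
    (hs : ∀ i : Fin (n - 1), φ (sigE n i) = swp i)
    (hsb : ∀ i : Fin (n - 1), φ (sigbE n i) = swp i)
    (ht : ∀ i : Fin (n - 1), φ (tauE n i) = swp i)
    (hr : ∀ i : Fin (n - 1), φ (rhoE n i) = swp i)
    (hg : ∀ j : Fin n, φ (gamE n j) = 1)
    (g : STVB n) :
    ∃ p r : STVB n, φ p = 1 ∧ r ∈ Submonoid.closure (Set.range (rhoE n)) ∧ g = p * r := by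
  have hC : g ∈ Submonoid.closure (Set.range (PresentedMonoid.of (Rel n))) := by
    rw [PresentedMonoid.closure_range_of]; trivial
  induction hC using Submonoid.closure_induction with
  | mem x hx =>
    obtain ⟨a, rfl⟩ := hx
    cases a with
    | sig i =>
      refine ⟨sigE n i * rhoE n i, rhoE n i, ?_, Submonoid.subset_closure ⟨i, rfl⟩, ?_⟩
      · rw [map_mul, hs, hr, swp, Equiv.swap_mul_self]
      · show sigE n i = sigE n i * rhoE n i * rhoE n i
        rw [mul_assoc, rho_invol, mul_one]
    | sigb i =>
      refine ⟨sigbE n i * rhoE n i, rhoE n i, ?_, Submonoid.subset_closure ⟨i, rfl⟩, ?_⟩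
      · rw [map_mul, hsb, hr, swp, Equiv.swap_mul_self]
      · show sigbE n i = sigbE n i * rhoE n i * rhoE n i
        rw [mul_assoc, rho_invol, mul_one]
    | tau i =>
      refine ⟨tauE n i * rhoE n i, rhoE n i, ?_, Submonoid.subset_closure ⟨i, rfl⟩, ?_⟩
      · rw [map_mul, ht, hr, swp, Equiv.swap_mul_self]
      · show tauE n i = tauE n i * rhoE n i * rhoE n i
        rw [mul_assoc, rho_invol, mul_one]
    | rho i =>
      exact ⟨1, rhoE n i, map_one φ, Submonoid.subset_closure ⟨i, rfl⟩, (one_mul _).symm⟩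
    | gam j =>
      exact ⟨gamE n j, 1, hg j, Submonoid.one_mem _, (mul_one _).symm⟩
  | one => exact ⟨1, 1, map_one φ, Submonoid.one_mem _, (mul_one 1).symm⟩
  | mul a b ha hb iha ihb =>
    obtain ⟨p₁, r₁, hp₁, hr₁, rfl⟩ := iha
    obtain ⟨p₂, r₂, hp₂, hr₂, rfl⟩ := ihb
    obtain ⟨r₁', hr₁', h11, h11'⟩ := closure_inv n hr₁
    refine ⟨p₁ * (r₁ * p₂ * r₁'), r₁ * r₂, ?_, Submonoid.mul_mem _ hr₁ hr₂, ?_⟩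
    · have : φ (r₁ * r₁') = 1 := by rw [h11, map_one]
      rw [map_mul, hp₁, one_mul, map_mul, map_mul, hp₂, mul_one, ← map_mul, this]
    · calc p₁ * r₁ * (p₂ * r₂) = p₁ * (r₁ * p₂ * (r₁' * r₁) * r₂) := by rw [h11']; group
        _ = p₁ * (r₁ * p₂ * r₁') * (r₁ * r₂) := by group
end

section
/- Let n ≥ 2 and let a be any element of the submonoid of STVB_n generated by ρ_1,…,ρ_{n−1}. Then a is a unit of STVB_n (since each ρ_i is an involution), and writing a⁻¹ for its inverse and π = φ₁(a)⁻¹ ∈ S_n, for all 1 ≤ i ≠ j ≤ n and all 1 ≤ i ≤ n one has: a⁻¹·λ_{i,j}·a = λ_{π(i),π(j)}, a⁻¹·y_{i,j}·a = y_{π(i),π(j)}, and a⁻¹·γ_i·a = γ_{π(i)}. -/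
/-
Since each `ρ_k` is an involution, every `a` in the submonoid they generate is invertible, and
the property "conjugation by `a` permutes the `λ_{i,j}`, `y_{i,j}`, `γ_i` according to
`φ₁(a)⁻¹`" is multiplicative in `a`; so it suffices to treat a single `ρ_k`, acting by the
transposition `(k, k+1)`. For `γ_i` this is a defining relation. For `λ_{i,j}` and `y_{i,j}`
with `i < j`, the definition gives `λ_{i,j+1} = ρ_j λ_{i,j} ρ_j`, and induction on `j` needs
only three facts: the `ρ`'s satisfy the Coxeter relations of type `A`, `ρ_k` commutes with
`λ_{m,m+1}` when `|k - m| > 1`, and `ρ_k λ_{k+1,k+2} ρ_k = ρ_{k+1} λ_{k,k+1} ρ_{k+1}`.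
The last two hold for `ρ_k` itself, for `σ̄_k` and `τ_k`, and are stable under products,
which covers `λ_{k,k+1} = ρ_k σ̄_k`, `y_{k,k+1} = τ_k ρ_k` and the reversed
`λ_{k+1,k} = ρ_k λ_{k,k+1} ρ_k`.
-/

section TypeA

variable {M : Type*} [Monoid M] {n : ℕ} {r c d : ℕ → M}

structure IsBraidCompatible (n : ℕ) (r c : ℕ → M) : Prop where
  commute : ∀ k m, k + 1 < n → m + 1 < n → (k + 1 < m ∨ m + 1 < k) → Commute (r k) (c m)
  slide : ∀ k, k + 2 < n → r k * c (k + 1) * r k = r (k + 1) * c k * r (k + 1)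

structure IsCoxeterA (n : ℕ) (r : ℕ → M) : Prop extends IsBraidCompatible n r r where
  mul_self : ∀ k, k + 1 < n → r k * r k = 1

namespace IsCoxeterA

theorem conj_conj (hr : IsCoxeterA n r) {k : ℕ} (hk : k + 1 < n) (x : M) :
    r k * (r k * x * r k) * r k = x := by
  simp only [← mul_assoc, hr.mul_self k hk, one_mul]
  rw [mul_assoc, hr.mul_self k hk, mul_one]

theorem conj_mul (hr : IsCoxeterA n r) {k : ℕ} (hk : k + 1 < n) (x y : M) :
    r k * (x * y) * r k = (r k * x * r k) * (r k * y * r k) := by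
  simp only [mul_assoc, ← mul_assoc (r k) (r k), hr.mul_self k hk, one_mul]

theorem conj_eq_of_commute (hr : IsCoxeterA n r) {k : ℕ} (hk : k + 1 < n) {x : M}
    (h : Commute (r k) x) : r k * x * r k = x := by
  rw [h.eq, mul_assoc, hr.mul_self k hk, mul_one]

end IsCoxeterA

theorem IsBraidCompatible.mul (hr : IsCoxeterA n r) (hc : IsBraidCompatible n r c)
    (hd : IsBraidCompatible n r d) : IsBraidCompatible n r (c * d) where
  commute k m hk hm h := (hc.commute k m hk hm h).mul_right (hd.commute k m hk hm h)
  slide k hk := by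
    rw [Pi.mul_apply, Pi.mul_apply, hr.conj_mul (by omega), hc.slide k hk, hd.slide k hk,
      ← hr.conj_mul hk]

/-- `r (j-1) ⋯ r (i+1) * c i * r (i+1) ⋯ r (j-1)`: the paper's `λ_{i,j}` for `i < j` when
`c i = λ_{i,i+1}`. -/
def pairElt (r c : ℕ → M) (i j : ℕ) : M :=
  ((List.range' (i + 1) (j - 1 - i)).reverse.map r).prod * c i *
    ((List.range' (i + 1) (j - 1 - i)).map r).prod

theorem pairElt_succ_self (r c : ℕ → M) (i : ℕ) : pairElt r c i (i + 1) = c i := by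
  simp [pairElt]

theorem pairElt_succ (r c : ℕ → M) {i j : ℕ} (hij : i < j) :
    pairElt r c i (j + 1) = r j * pairElt r c i j * r j := by
  have hlen : j + 1 - 1 - i = j - 1 - i + 1 := by omega
  have hlast : i + 1 + (j - 1 - i) = j := by omega
  simp only [pairElt, hlen, List.range'_1_concat, hlast, List.reverse_append, List.map_append,
    List.prod_append, List.reverse_singleton, List.map_singleton, List.prod_singleton, mul_assoc]

theorem commute_pairElt (hr : IsCoxeterA n r) (hc : IsBraidCompatible n r c) {i j m : ℕ}
    (hij : i < j) (hjm : j < m) (hm : m + 1 < n) : Commute (r m) (pairElt r c i j) := by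
  induction j, hij using Nat.le_induction with
  | base => rw [pairElt_succ_self]; exact hc.commute m i hm (by omega) (by omega)
  | succ j hij ih =>
    have hmj : Commute (r m) (r j) := (hr.commute j m (by omega) hm (by omega)).symm
    rw [pairElt_succ r c hij]
    exact (hmj.mul_right (ih (by omega))).mul_right hmj

theorem conj_conj_pairElt (hr : IsCoxeterA n r) (hc : IsBraidCompatible n r c) {i k : ℕ}
    (hik : i < k) (hkn : k + 2 < n) :
    r k * (r (k + 1) * pairElt r c i (k + 1) * r (k + 1)) * r k = pairElt r c i (k + 2) := by
  have hfix : r (k + 1) * pairElt r c i k * r (k + 1) = pairElt r c i k :=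
    hr.conj_eq_of_commute (by omega) (commute_pairElt hr hc hik (by omega) (by omega))
  calc r k * (r (k + 1) * pairElt r c i (k + 1) * r (k + 1)) * r k
      = (r k * r (k + 1) * r k) * pairElt r c i k * (r k * r (k + 1) * r k) := by
        rw [pairElt_succ r c hik]; simp only [mul_assoc]
    _ = r (k + 1) * (r k * (r (k + 1) * pairElt r c i k * r (k + 1)) * r k) * r (k + 1) := by
        rw [hr.slide k hkn]; simp only [mul_assoc]
    _ = pairElt r c i (k + 2) := by
        rw [hfix, ← pairElt_succ r c hik, ← pairElt_succ r c (by omega)]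

theorem conj_pairElt_succ_self (hr : IsCoxeterA n r) (hc : IsBraidCompatible n r c) {i k : ℕ}
    (hin : i + 1 < n) (hk : k + 1 < n) (hik : i ≠ k) :
    r k * pairElt r c i (i + 1) * r k =
      pairElt r c (Equiv.swap k (k + 1) i) (Equiv.swap k (k + 1) (i + 1)) := by
  rw [pairElt_succ_self]
  obtain rfl | rfl | hfar : k + 1 = i ∨ k = i + 1 ∨ (k + 1 < i ∨ i + 1 < k) := by omega
  · simp (disch := omega) only [Equiv.swap_apply_of_ne_of_ne, Equiv.swap_apply_right]
    rw [hc.slide k hin, ← pairElt_succ_self r c k, ← pairElt_succ r c (by omega)]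
  · simp (disch := omega) only [Equiv.swap_apply_of_ne_of_ne, Equiv.swap_apply_left]
    rw [← pairElt_succ_self r c i, ← pairElt_succ r c (by omega)]
  · simp (disch := omega) only [Equiv.swap_apply_of_ne_of_ne]
    rw [hr.conj_eq_of_commute hk (hc.commute k i hk hin hfar), pairElt_succ_self]

theorem conj_pairElt (hr : IsCoxeterA n r) (hc : IsBraidCompatible n r c) {i j k : ℕ}
    (hij : i < j) (hjn : j < n) (hk : k + 1 < n) (hne : ¬(i = k ∧ j = k + 1)) :
    r k * pairElt r c i j * r k =
      pairElt r c (Equiv.swap k (k + 1) i) (Equiv.swap k (k + 1) j) := by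
  induction j, hij using Nat.le_induction with
  | base => exact conj_pairElt_succ_self hr hc hjn hk fun h => hne ⟨h, by omega⟩
  | succ j hij ih =>
    rw [pairElt_succ r c hij]
    obtain rfl | rfl | rfl | hfar :
        k = j ∨ k = j + 1 ∨ k + 1 = j ∨ (k + 1 < j ∨ j + 1 < k) := by omega
    · simp (disch := omega) only [Equiv.swap_apply_of_ne_of_ne, Equiv.swap_apply_right]
      rw [hr.conj_conj hk]
    · simp (disch := omega) only [Equiv.swap_apply_of_ne_of_ne, Equiv.swap_apply_left]
      rw [← pairElt_succ r c hij, ← pairElt_succ r c (by omega)]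
    · simp (disch := omega) only [Equiv.swap_apply_of_ne_of_ne]
      obtain rfl | hik := eq_or_lt_of_le (Nat.le_of_lt_succ hij)
      · rw [Equiv.swap_apply_left, pairElt_succ_self, pairElt_succ_self, ← hc.slide i hjn,
          hr.conj_conj hk]
      · rw [Equiv.swap_apply_of_ne_of_ne (by omega) (by omega),
          conj_conj_pairElt hr hc hik hjn]
    · have hkj : Commute (r k) (r j) := hr.commute k j hk (by omega) hfar
      have hswap : Equiv.swap k (k + 1) i < j := by
        rw [Equiv.swap_apply_def]; split_ifs <;> omega
      rw [hr.conj_mul hk, hr.conj_mul hk, hr.conj_eq_of_commute hk hkj, ih (by omega) (by omega),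
        Equiv.swap_apply_of_ne_of_ne (x := j) (by omega) (by omega), ← pairElt_succ r c hswap,
        Equiv.swap_apply_of_ne_of_ne (x := j + 1) (by omega) (by omega)]

theorem swap_succ_lt_swap_succ {i j k : ℕ} (hij : i < j) (hne : ¬(i = k ∧ j = k + 1)) :
    Equiv.swap k (k + 1) i < Equiv.swap k (k + 1) j := by
  simp only [Equiv.swap_apply_def]
  split_ifs <;> omega

/-- For `i > j` this is built from `λ_{j+1,j} = ρ_j λ_{j,j+1} ρ_j`, i.e. from the family
`r * c * r`. -/
def orientedElt (r c : ℕ → M) (i j : ℕ) : M :=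
  if i < j then pairElt r c i j else pairElt r (r * c * r) j i

theorem conj_orientedElt (hr : IsCoxeterA n r) (hc : IsBraidCompatible n r c) {i j k : ℕ}
    (hi : i < n) (hj : j < n) (hk : k + 1 < n) (hij : i ≠ j) :
    r k * orientedElt r c i j * r k =
      orientedElt r c (Equiv.swap k (k + 1) i) (Equiv.swap k (k + 1) j) := by
  have hc' : IsBraidCompatible n r (r * c * r) :=
    (hr.toIsBraidCompatible.mul hr hc).mul hr hr.toIsBraidCompatible
  rcases lt_or_gt_of_ne hij with h | h
  · by_cases hflip : i = k ∧ j = k + 1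
    · obtain ⟨rfl, rfl⟩ := hflip
      simp only [orientedElt, Equiv.swap_apply_left, Equiv.swap_apply_right, if_pos h,
        if_neg (lt_asymm h), pairElt_succ_self, Pi.mul_apply]
    · rw [orientedElt, if_pos h, conj_pairElt hr hc h hj hk hflip, orientedElt,
        if_pos (swap_succ_lt_swap_succ h hflip)]
  · by_cases hflip : j = k ∧ i = k + 1
    · obtain ⟨rfl, rfl⟩ := hflip
      simp only [orientedElt, Equiv.swap_apply_left, Equiv.swap_apply_right, if_pos h,
        if_neg (lt_asymm h), pairElt_succ_self, Pi.mul_apply, hr.conj_conj hk]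
    · have hlt := swap_succ_lt_swap_succ h hflip
      rw [orientedElt, if_neg (lt_asymm h), conj_pairElt hr hc' h hi hk hflip, orientedElt,
        if_neg (lt_asymm hlt)]

end TypeA

section ConjPermutes

variable {M α : Type*} [Monoid M] (φ : M →* Equiv.Perm α)

def ConjPermutes (g : α → M) (a b : M) : Prop :=
  ∀ i, b * g i * a = g ((φ a)⁻¹ i)

def ConjPermutes₂ (g : α → α → M) (a b : M) : Prop :=
  ∀ i j, i ≠ j → b * g i j * a = g ((φ a)⁻¹ i) ((φ a)⁻¹ j)

variable {φ}

theorem ConjPermutes.one (g : α → M) : ConjPermutes φ g 1 1 := fun i => by simp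

theorem ConjPermutes₂.one (g : α → α → M) : ConjPermutes₂ φ g 1 1 := fun i j _ => by simp

theorem ConjPermutes.mul {g : α → M} {a b a' b' : M} (h : ConjPermutes φ g a b)
    (h' : ConjPermutes φ g a' b') : ConjPermutes φ g (a * a') (b' * b) := fun i =>
  calc b' * b * g i * (a * a') = b' * (b * g i * a) * a' := by simp only [mul_assoc]
    _ = g ((φ (a * a'))⁻¹ i) := by rw [h, h', map_mul, mul_inv_rev, Equiv.Perm.mul_apply]

theorem ConjPermutes₂.mul {g : α → α → M} {a b a' b' : M} (h : ConjPermutes₂ φ g a b)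
    (h' : ConjPermutes₂ φ g a' b') : ConjPermutes₂ φ g (a * a') (b' * b) := fun i j hij =>
  calc b' * b * g i j * (a * a') = b' * (b * g i j * a) * a' := by simp only [mul_assoc]
    _ = g ((φ (a * a'))⁻¹ i) ((φ (a * a'))⁻¹ j) := by
      rw [h i j hij, h' _ _ ((φ a)⁻¹.injective.ne hij), map_mul, mul_inv_rev,
        Equiv.Perm.mul_apply, Equiv.Perm.mul_apply]

end ConjPermutes

theorem exists_inverse_of_mem_closure_involutions {M : Type*} [Monoid M] {s : Set M}
    (P : M → M → Prop) (hone : P 1 1)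
    (hmul : ∀ a b a' b', P a b → P a' b' → P (a * a') (b' * b))
    (hs : ∀ x ∈ s, x * x = 1 ∧ P x x) {a : M} (ha : a ∈ Submonoid.closure s) :
    ∃ b, a * b = 1 ∧ b * a = 1 ∧ P a b := by
  induction ha using Submonoid.closure_induction with
  | mem x hx => exact ⟨x, (hs x hx).1, (hs x hx).1, (hs x hx).2⟩
  | one => exact ⟨1, one_mul 1, one_mul 1, hone⟩
  | mul x y _ _ hx hy =>
    obtain ⟨b, hxb, hbx, hP⟩ := hx
    obtain ⟨b', hyb, hby, hP'⟩ := hy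
    refine ⟨b' * b, ?_, ?_, hmul x b y b' hP hP'⟩
    · rw [mul_assoc, ← mul_assoc y, hyb, one_mul, hxb]
    · rw [mul_assoc, ← mul_assoc b, hbx, one_mul, hby]

namespace SingTVB

variable {n : ℕ}

theorem mkS_eq_of_rel {x y : FM n} (h : Rel n x y) : mkS n x = mkS n y :=
  PresentedMonoid.mk_eq_mk_of_rel h

theorem rhoE_mul_self (k : Fin (n - 1)) : rhoE n k * rhoE n k = 1 :=
  mkS_eq_of_rel (Rel.rho2 k)

def rhoUnit (k : Fin (n - 1)) : (STVB n)ˣ :=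
  ⟨rhoE n k, rhoE n k, rhoE_mul_self k, rhoE_mul_self k⟩

def sigUnit (k : Fin (n - 1)) : (STVB n)ˣ :=
  ⟨sigE n k, sigbE n k, mkS_eq_of_rel (Rel.ssb k), mkS_eq_of_rel (Rel.sbs k)⟩

theorem rhoE_sigbE_rhoE {a b : Fin (n - 1)} (h : b.val = a.val + 1) :
    rhoE n a * sigbE n b * rhoE n a = rhoE n b * sigbE n a * rhoE n b := by
  have hσ : rhoUnit a * sigUnit b * rhoUnit a = rhoUnit b * sigUnit a * rhoUnit b :=
    Units.ext (mkS_eq_of_rel (Rel.rsr h))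
  have hinv := congrArg (fun u => (u⁻¹).val) hσ
  simp only [mul_inv_rev, Units.val_mul, mul_assoc] at hinv
  exact hinv

theorem commute_rhoE_sigbE {a b : Fin (n - 1)} (h : Far b a) :
    Commute (rhoE n a) (sigbE n b) :=
  (show Commute (rhoE n a) (sigUnit b) from (mkS_eq_of_rel (Rel.sr h)).symm).units_inv_right

def rhoN (n k : ℕ) : STVB n := mkS n (WrN n k)
def sigbN (n k : ℕ) : STVB n := mkS n (WsbN n k)
def tauN (n k : ℕ) : STVB n := mkS n (WtN n k)

theorem rhoN_of_lt {k : ℕ} (h : k < n - 1) : rhoN n k = rhoE n ⟨k, h⟩ := by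
  rw [rhoN, WrN, dif_pos h]; rfl
theorem sigbN_of_lt {k : ℕ} (h : k < n - 1) : sigbN n k = sigbE n ⟨k, h⟩ := by
  rw [sigbN, WsbN, dif_pos h]; rfl
theorem tauN_of_lt {k : ℕ} (h : k < n - 1) : tauN n k = tauE n ⟨k, h⟩ := by
  rw [tauN, WtN, dif_pos h]; rfl

theorem isCoxeterA_rhoN : IsCoxeterA n (rhoN n) where
  commute k m hk hm h := by
    rw [rhoN_of_lt (by omega), rhoN_of_lt (by omega)]
    exact mkS_eq_of_rel (Rel.rr h)
  slide k hk := by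
    rw [rhoN_of_lt (by omega), rhoN_of_lt (by omega)]
    exact mkS_eq_of_rel (Rel.rrr rfl)
  mul_self k hk := by
    rw [rhoN_of_lt (by omega)]
    exact rhoE_mul_self _

theorem isBraidCompatible_sigbN : IsBraidCompatible n (rhoN n) (sigbN n) where
  commute k m hk hm h := by
    rw [rhoN_of_lt (by omega), sigbN_of_lt (by omega)]
    exact commute_rhoE_sigbE h.symm
  slide k hk := by
    rw [rhoN_of_lt (by omega), rhoN_of_lt (by omega), sigbN_of_lt (by omega),
      sigbN_of_lt (by omega)]
    exact rhoE_sigbE_rhoE rfl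

theorem isBraidCompatible_tauN : IsBraidCompatible n (rhoN n) (tauN n) where
  commute k m hk hm h := by
    rw [rhoN_of_lt (by omega), tauN_of_lt (by omega)]
    exact (mkS_eq_of_rel (Rel.tr (i := ⟨m, by omega⟩) (j := ⟨k, by omega⟩) h.symm)).symm
  slide k hk := by
    rw [rhoN_of_lt (by omega), rhoN_of_lt (by omega), tauN_of_lt (by omega),
      tauN_of_lt (by omega)]
    exact mkS_eq_of_rel (Rel.rtr rfl)

theorem lam_eq_orientedElt (i j : Fin n) :
    lam n i j = orientedElt (rhoN n) (rhoN n * sigbN n) i j := by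
  unfold lam lamW orientedElt pairElt desc asc
  split_ifs <;> simp only [map_mul, map_list_prod, List.map_map] <;> rfl

theorem yel_eq_orientedElt (i j : Fin n) :
    yel n i j = orientedElt (rhoN n) (tauN n * rhoN n) i j := by
  unfold yel yW orientedElt pairElt desc asc
  split_ifs <;> simp only [map_mul, map_list_prod, List.map_map] <;> rfl

theorem val_swp (k : Fin (n - 1)) (i : Fin n) :
    (swp k i : ℕ) = Equiv.swap (k : ℕ) (k + 1) i :=
  (Fin.val_injective.swap_apply (fa k) (fb k) i).symm

theorem rhoE_eq_rhoN (k : Fin (n - 1)) : rhoE n k = rhoN n k := (rhoN_of_lt k.isLt).symm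

theorem rhoE_mul_lam_mul_rhoE (k : Fin (n - 1)) {i j : Fin n} (hij : i ≠ j) :
    rhoE n k * lam n i j * rhoE n k = lam n (swp k i) (swp k j) := by
  rw [lam_eq_orientedElt, lam_eq_orientedElt, val_swp, val_swp, rhoE_eq_rhoN]
  exact conj_orientedElt isCoxeterA_rhoN
    (isCoxeterA_rhoN.toIsBraidCompatible.mul isCoxeterA_rhoN isBraidCompatible_sigbN)
    i.isLt j.isLt (by omega) (Fin.val_ne_of_ne hij)

theorem rhoE_mul_yel_mul_rhoE (k : Fin (n - 1)) {i j : Fin n} (hij : i ≠ j) :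
    rhoE n k * yel n i j * rhoE n k = yel n (swp k i) (swp k j) := by
  rw [yel_eq_orientedElt, yel_eq_orientedElt, val_swp, val_swp, rhoE_eq_rhoN]
  exact conj_orientedElt isCoxeterA_rhoN
    (isBraidCompatible_tauN.mul isCoxeterA_rhoN isCoxeterA_rhoN.toIsBraidCompatible)
    i.isLt j.isLt (by omega) (Fin.val_ne_of_ne hij)

theorem rhoE_mul_gamE_mul_rhoE (k : Fin (n - 1)) (i : Fin n) :
    rhoE n k * gamE n i * rhoE n k = gamE n (swp k i) := by
  have hγ : gamE n (fb k) * rhoE n k = rhoE n k * gamE n (fa k) := mkS_eq_of_rel (Rel.grel k)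
  rw [swp, Equiv.swap_apply_def]
  split_ifs with ha hb
  · rw [ha, ← hγ, mul_assoc, rhoE_mul_self, mul_one]
  · rw [hb, mul_assoc, hγ, ← mul_assoc, rhoE_mul_self, one_mul]
  · have hc : gamE n i * rhoE n k = rhoE n k * gamE n i := mkS_eq_of_rel (Rel.grc ha hb)
    rw [← hc, mul_assoc, rhoE_mul_self, mul_one]

end SingTVB

open SingTVB in
theorem stvb_conjugation_action_general (n : ℕ) (φ : STVB n →* Equiv.Perm (Fin n))
    (hr : ∀ i : Fin (n - 1), φ (rhoE n i) = swp i)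
    (a : STVB n) (ha : a ∈ Submonoid.closure (Set.range (rhoE n))) :
    ∃ b : STVB n, a * b = 1 ∧ b * a = 1 ∧
      (∀ i j : Fin n, i ≠ j → b * lam n i j * a = lam n ((φ a)⁻¹ i) ((φ a)⁻¹ j)) ∧
      (∀ i j : Fin n, i ≠ j → b * yel n i j * a = yel n ((φ a)⁻¹ i) ((φ a)⁻¹ j)) ∧
      (∀ i : Fin n, b * gamE n i * a = gamE n ((φ a)⁻¹ i)) := by
  refine exists_inverse_of_mem_closure_involutions
    (fun a b => ConjPermutes₂ φ (lam n) a b ∧ ConjPermutes₂ φ (yel n) a b ∧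
      ConjPermutes φ (gamE n) a b)
    ⟨.one _, .one _, .one _⟩
    (fun _ _ _ _ ⟨hl, hy, hg⟩ ⟨hl', hy', hg'⟩ => ⟨hl.mul hl', hy.mul hy', hg.mul hg'⟩)
    ?_ ha
  rintro _ ⟨k, rfl⟩
  have hπ : (φ (rhoE n k))⁻¹ = swp k := by rw [hr k, swp, Equiv.swap_inv]
  refine ⟨rhoE_mul_self k, fun i j hij => ?_, fun i j hij => ?_, fun i => ?_⟩ <;> rw [hπ]
  · exact rhoE_mul_lam_mul_rhoE k hij
  · exact rhoE_mul_yel_mul_rhoE k hij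
  · exact rhoE_mul_gamE_mul_rhoE k i

open SingTVB in
/-- Lemma on the conjugation action: every element `a` of the submonoid
generated by the `ρᵢ` is a unit, and conjugation by `a` permutes the generators
`λ_{i,j}`, `y_{i,j}`, `γ_i` according to the permutation `π = φ₁(a)⁻¹`. -/
theorem stvb_conjugation_action (n : ℕ) (hn : 2 ≤ n) (φ : STVB n →* Equiv.Perm (Fin n))
    (hs : ∀ i : Fin (n - 1), φ (sigE n i) = swp i)
    (hsb : ∀ i : Fin (n - 1), φ (sigbE n i) = swp i)
    (ht : ∀ i : Fin (n - 1), φ (tauE n i) = swp i)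
    (hr : ∀ i : Fin (n - 1), φ (rhoE n i) = swp i)
    (hg : ∀ j : Fin n, φ (gamE n j) = 1)
    (a : STVB n) (ha : a ∈ Submonoid.closure (Set.range (rhoE n))) :
    ∃ b : STVB n, a * b = 1 ∧ b * a = 1 ∧
      (∀ i j : Fin n, i ≠ j → b * lam n i j * a = lam n ((φ a)⁻¹ i) ((φ a)⁻¹ j)) ∧
      (∀ i j : Fin n, i ≠ j → b * yel n i j * a = yel n ((φ a)⁻¹ i) ((φ a)⁻¹ j)) ∧
      (∀ i : Fin n, b * gamE n i * a = gamE n ((φ a)⁻¹ i)) :=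
  stvb_conjugation_action_general n φ hr a ha
end
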